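/- (Main Theorem for n-gons, part (ii).) Let n ≥ 3, let v : Fin n → ℂ be a labelling of the vertices of an n-gon, and let X ∈ Fix(v), i.e. X is a point fixed by every symmetry of the n-gon v. Then there exists an n-gon center Z, defined on the family of all labellings Fin n → ℂ, such that Z(v) = X. -/

import Mathlib

noncomputable section

/-- A similarity of the plane: a bijection multiplying all distances by a fixed
positive ratio. -/
def IsSimilarity (f : ℂ → ℂ) : Prop :=
  Function.Bijective f ∧ ∃ r : ℝ, 0 < r ∧
    ∀ z w : ℂ, ‖f z - f w‖ = r * ‖z - w‖

/-- An isometry of the plane: a similarity with ratio 1. -/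
def IsPlaneIsometry (f : ℂ → ℂ) : Prop :=
  Function.Bijective f ∧ ∀ z w : ℂ, ‖f z - f w‖ = ‖z - w‖

/-- `α` is an element of the dihedral subgroup of the permutations of `Fin n`:
`i ↦ i + k` or `i ↦ k - i` (mod `n`). -/
def IsDihedral (n : ℕ) (α : Fin n → Fin n) : Prop :=
  (∃ k : Fin n, ∀ i, α i = i + k) ∨ (∃ k : Fin n, ∀ i, α i = k - i)

/-- `T` is a symmetry of the `n`-gon labelled by `v`: a plane isometry with
`T ∘ v = v ∘ α` for some dihedral relabelling `α`. -/
def IsPolygonSymmetry (n : ℕ) (v : Fin n → ℂ) (T : ℂ → ℂ) : Prop :=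
  IsPlaneIsometry T ∧ ∃ α : Fin n → Fin n, IsDihedral n α ∧ T ∘ v = v ∘ α

/-- The set of points fixed by every symmetry of the `n`-gon labelled by `v`. -/
def FixPolygon (n : ℕ) (v : Fin n → ℂ) : Set ℂ :=
  {x | ∀ T : ℂ → ℂ, IsPolygonSymmetry n v T → T x = x}


/-!
Similarities act on labellings on the left and dihedral relabellings on the right, and a center
is a map equivariant for both actions. On the orbit of `v` put `Z (f ∘ v ∘ α) = f X`. This is
well defined: two presentations of the same labelling differ by a similarity `g` with
`g ∘ v = v ∘ β`, and such a `g` fixes `X`. Indeed, if `v` is not constant, `g` multiplies the sum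
of all distances between vertices by its ratio while permuting its terms, so `g` is an isometry,
i.e. a symmetry of `v`; if `v` is constant, the point reflection in that point is a symmetry,
so `X` is that point. Off the orbit of `v`, `Z` is the centroid.
-/

section Centroid

variable {k V P V₂ P₂ ι : Type*} [DivisionRing k] [AddCommGroup V] [Module k V] [AddTorsor V P]
  [AddCommGroup V₂] [Module k V₂] [AddTorsor V₂ P₂] [Fintype ι]

theorem Finset.univ_centroid_comp_of_bijective (p : ι → P) {σ : ι → ι} (hσ : σ.Bijective) :
    Finset.univ.centroid k (p ∘ σ) = Finset.univ.centroid k p := by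
  have h := Finset.univ.centroid_map k (Equiv.ofBijective σ hσ).toEmbedding p
  rw [Finset.map_univ_equiv] at h
  exact h.symm

theorem AffineMap.map_univ_centroid [CharZero k] [Nonempty ι] (f : P →ᵃ[k] P₂) (p : ι → P) :
    f (Finset.univ.centroid k p) = Finset.univ.centroid k (f ∘ p) := by
  rw [Finset.centroid_def, Finset.centroid_def, Finset.map_affineCombination _ _ _
    (Finset.univ.sum_centroidWeights_eq_one_of_nonempty k Finset.univ_nonempty)]

end Centroid

namespace IsSimilarity

variable {f g : ℂ → ℂ}

lemma exists_affineMap_eq (hf : IsSimilarity f) : ∃ A : ℂ →ᵃ[ℝ] ℂ, ⇑A = f := by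
  obtain ⟨hbij, r, hr, hdist⟩ := hf
  have hr' : (r : ℂ) ≠ 0 := by exact_mod_cast hr.ne'
  set u : ℂ → ℂ := fun z => (r : ℂ)⁻¹ * f z
  have hu_bij : u.Bijective := (Equiv.mulLeft₀ _ (inv_ne_zero hr')).bijective.comp hbij
  have hu_iso : Isometry u := Isometry.of_dist_eq fun z w => by
    simp only [u, Complex.dist_eq, ← mul_sub, norm_mul, hdist, norm_inv, Complex.norm_real,
      Real.norm_of_nonneg hr.le, inv_mul_cancel_left₀ hr.ne']
  let e : ℂ ≃ᵢ ℂ := ⟨Equiv.ofBijective u hu_bij, hu_iso⟩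
  -- Mazur–Ulam: the isometric bijection `u` is real-affine.
  refine ⟨(LinearMap.mulLeft ℝ (r : ℂ)).toAffineMap.comp e.toRealAffineIsometryEquiv.toAffineMap,
    ?_⟩
  ext z
  change (r : ℂ) * u z = f z
  simp only [u, mul_inv_cancel_left₀ hr']

protected lemma id : IsSimilarity id :=
  ⟨Function.bijective_id, 1, one_pos, fun _ _ => (one_mul _).symm⟩

lemma comp (hf : IsSimilarity f) (hg : IsSimilarity g) : IsSimilarity (f ∘ g) := by
  obtain ⟨hf_bij, r, hr, hf_dist⟩ := hf
  obtain ⟨hg_bij, s, hs, hg_dist⟩ := hg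
  exact ⟨hf_bij.comp hg_bij, r * s, mul_pos hr hs, fun z w => by
    simp only [Function.comp_apply, hf_dist, hg_dist, mul_assoc]⟩

lemma symm (hf : IsSimilarity f) : IsSimilarity (Equiv.ofBijective f hf.1).symm := by
  obtain ⟨hbij, r, hr, hdist⟩ := hf
  set e := Equiv.ofBijective f hbij
  refine ⟨e.symm.bijective, r⁻¹, inv_pos.mpr hr, fun z w => ?_⟩
  have h := hdist (e.symm z) (e.symm w)
  rw [show f (e.symm z) = z from e.apply_symm_apply z,
    show f (e.symm w) = w from e.apply_symm_apply w] at h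
  rw [h, inv_mul_cancel_left₀ hr.ne']

lemma univ_centroid_comp {ι : Type*} [Fintype ι] [Nonempty ι] (hf : IsSimilarity f)
    (p : ι → ℂ) : Finset.univ.centroid ℝ (f ∘ p) = f (Finset.univ.centroid ℝ p) := by
  obtain ⟨A, rfl⟩ := hf.exists_affineMap_eq
  exact (A.map_univ_centroid p).symm

lemma isPlaneIsometry_of_comp_eq {ι : Type*} [Fintype ι] {v : ι → ℂ} {i j : ι} (hij : v i ≠ v j)
    (hf : IsSimilarity f) {σ : ι → ι} (hσ : σ.Bijective) (h : f ∘ v = v ∘ σ) :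
    IsPlaneIsometry f := by
  obtain ⟨hbij, r, hr, hdist⟩ := hf
  have hfv (x : ι) : f (v x) = v (σ x) := congrFun h x
  set S := ∑ p : ι × ι, ‖v p.1 - v p.2‖
  have hS : 0 < S := Finset.sum_pos' (fun _ _ => norm_nonneg _)
    ⟨(i, j), Finset.mem_univ _, norm_pos_iff.mpr (sub_ne_zero.mpr hij)⟩
  have hrS : r * S = S := calc
    r * S = ∑ p : ι × ι, ‖f (v p.1) - f (v p.2)‖ := by simp only [S, Finset.mul_sum, hdist]
    _ = ∑ p : ι × ι, ‖v (σ p.1) - v (σ p.2)‖ := by simp only [hfv]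
    _ = S := Fintype.sum_bijective (Prod.map σ σ) (hσ.prodMap hσ) _ _ fun _ => rfl
  have hr1 : r = 1 := by nlinarith
  exact ⟨hbij, fun z w => by rw [hdist, hr1, one_mul]⟩

end IsSimilarity

namespace IsDihedral

variable {n : ℕ} [NeZero n] {α β : Fin n → Fin n}

lemma id : IsDihedral n id := Or.inl ⟨0, fun i => (add_zero i).symm⟩

lemma bijective (hα : IsDihedral n α) : α.Bijective := by
  rcases hα with ⟨k, hk⟩ | ⟨k, hk⟩
  · rw [funext hk]; exact (Equiv.addRight k).bijective
  · rw [funext hk]; exact (Equiv.subLeft k).bijective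

lemma comp (hα : IsDihedral n α) (hβ : IsDihedral n β) : IsDihedral n (α ∘ β) := by
  rcases hα with ⟨k, hk⟩ | ⟨k, hk⟩ <;> rcases hβ with ⟨l, hl⟩ | ⟨l, hl⟩
  · exact Or.inl ⟨l + k, fun i => by simp only [Function.comp_apply, hk, hl]; abel⟩
  · exact Or.inr ⟨l + k, fun i => by simp only [Function.comp_apply, hk, hl]; abel⟩
  · exact Or.inr ⟨k - l, fun i => by simp only [Function.comp_apply, hk, hl]; abel⟩
  · exact Or.inl ⟨k - l, fun i => by simp only [Function.comp_apply, hk, hl]; abel⟩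

lemma symm (hα : IsDihedral n α) : IsDihedral n (Equiv.ofBijective α hα.bijective).symm := by
  rcases hα with ⟨k, hk⟩ | ⟨k, hk⟩
  · exact Or.inl ⟨-k, fun i => (Equiv.symm_apply_eq _).mpr (by simp [hk])⟩
  · exact Or.inr ⟨k, fun i => (Equiv.symm_apply_eq _).mpr (by simp [hk])⟩

end IsDihedral

section FixPolygon

variable {n : ℕ} [NeZero n] {v : Fin n → ℂ} {X : ℂ}

lemma eq_of_mem_fixPolygon_of_forall_eq {c : ℂ} (hv : ∀ i, v i = c) (hX : X ∈ FixPolygon n v) :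
    X = c := by
  have hrefl : IsPolygonSymmetry n v (fun z => 2 * c - z) := by
    refine ⟨⟨⟨fun z w h => by simpa using h, fun z => ⟨2 * c - z, by ring⟩⟩, fun z w => ?_⟩,
      id, IsDihedral.id, funext fun i => ?_⟩
    · rw [show 2 * c - z - (2 * c - w) = -(z - w) by ring, norm_neg]
    · simp only [Function.comp_apply, hv, id]; ring
  have h := hX _ hrefl
  linear_combination -h / 2

lemma IsSimilarity.apply_eq_of_mem_fixPolygon (hX : X ∈ FixPolygon n v) {g : ℂ → ℂ}
    (hg : IsSimilarity g) {α : Fin n → Fin n} (hα : IsDihedral n α) (h : g ∘ v = v ∘ α) :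
    g X = X := by
  by_cases hv : ∀ i, v i = v 0
  · rw [eq_of_mem_fixPolygon_of_forall_eq hv hX]
    exact (congrFun h 0).trans (hv _)
  · obtain ⟨i, hi⟩ := not_forall.mp hv
    exact hX g ⟨hg.isPlaneIsometry_of_comp_eq hi hα.bijective h, α, hα, h⟩

end FixPolygon

section ExtendedCenter

variable {n : ℕ} {v w : Fin n → ℂ} {X : ℂ}

def IsSimilarPolygon (n : ℕ) (v w : Fin n → ℂ) : Prop :=
  ∃ f α, IsSimilarity f ∧ IsDihedral n α ∧ w = f ∘ v ∘ α

lemma isSimilarPolygon_similarity_comp_iff {f : ℂ → ℂ} (hf : IsSimilarity f) :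
    IsSimilarPolygon n v (f ∘ w) ↔ IsSimilarPolygon n v w := by
  constructor
  · rintro ⟨g, β, hg, hβ, hw⟩
    refine ⟨(Equiv.ofBijective f hf.1).symm ∘ g, β, hf.symm.comp hg, hβ, ?_⟩
    rw [← Function.id_comp w, ← (Equiv.ofBijective f hf.1).symm_comp_self]
    simp only [Function.comp_assoc, Equiv.coe_ofBijective, hw]
  · rintro ⟨g, β, hg, hβ, rfl⟩
    exact ⟨f ∘ g, β, hf.comp hg, hβ, rfl⟩

variable [NeZero n]

lemma isSimilarPolygon_comp_iff {α : Fin n → Fin n} (hα : IsDihedral n α) :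
    IsSimilarPolygon n v (w ∘ α) ↔ IsSimilarPolygon n v w := by
  constructor
  · rintro ⟨f, β, hf, hβ, hw⟩
    refine ⟨f, β ∘ (Equiv.ofBijective α hα.bijective).symm, hf, hβ.comp hα.symm, ?_⟩
    rw [← Function.comp_id w, ← (Equiv.ofBijective α hα.bijective).self_comp_symm]
    simp only [← Function.comp_assoc, Equiv.coe_ofBijective, hw]
  · rintro ⟨f, β, hf, hβ, rfl⟩
    exact ⟨f, β ∘ α, hf, hβ.comp hα, rfl⟩

lemma apply_eq_apply_of_mem_fixPolygon (hX : X ∈ FixPolygon n v) {f g : ℂ → ℂ}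
    (hf : IsSimilarity f) (hg : IsSimilarity g) {α β : Fin n → Fin n} (hα : IsDihedral n α)
    (hβ : IsDihedral n β) (h : f ∘ v ∘ α = g ∘ v ∘ β) : f X = g X := by
  set e := Equiv.ofBijective g hg.1
  set σ := Equiv.ofBijective α hα.bijective
  have hrel : (e.symm ∘ f) ∘ v = v ∘ (β ∘ σ.symm) := funext fun i => by
    have hi : f (v (α (σ.symm i))) = g (v (β (σ.symm i))) := congrFun h (σ.symm i)
    rw [show α (σ.symm i) = i from σ.apply_symm_apply i] at hi
    exact (congrArg e.symm hi).trans (e.symm_apply_apply _)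
  exact e.symm_apply_eq.mp
    ((hg.symm.comp hf).apply_eq_of_mem_fixPolygon hX (hβ.comp hα.symm) hrel)

open Classical in
def extendedCenter (n : ℕ) (v : Fin n → ℂ) (X : ℂ) (w : Fin n → ℂ) : ℂ :=
  if h : IsSimilarPolygon n v w then h.choose X else Finset.univ.centroid ℝ w

lemma extendedCenter_eq (hX : X ∈ FixPolygon n v) {f : ℂ → ℂ} {α : Fin n → Fin n}
    (hf : IsSimilarity f) (hα : IsDihedral n α) (hw : w = f ∘ v ∘ α) :
    extendedCenter n v X w = f X := by
  have hsim : IsSimilarPolygon n v w := ⟨f, α, hf, hα, hw⟩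
  obtain ⟨β, hg, hβ, hw'⟩ := hsim.choose_spec
  rw [extendedCenter, dif_pos hsim]
  exact apply_eq_apply_of_mem_fixPolygon hX hg hf hβ hα (hw'.symm.trans hw)

lemma extendedCenter_comp (hX : X ∈ FixPolygon n v) {α : Fin n → Fin n} (hα : IsDihedral n α) :
    extendedCenter n v X (w ∘ α) = extendedCenter n v X w := by
  by_cases hw : IsSimilarPolygon n v w
  · obtain ⟨f, β, hf, hβ, rfl⟩ := hw
    exact (extendedCenter_eq hX hf (hβ.comp hα) rfl).trans (extendedCenter_eq hX hf hβ rfl).symm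
  · rw [extendedCenter, extendedCenter, dif_neg hw,
      dif_neg ((isSimilarPolygon_comp_iff hα).not.mpr hw),
      Finset.univ_centroid_comp_of_bijective _ hα.bijective]

lemma extendedCenter_similarity_comp (hX : X ∈ FixPolygon n v) {f : ℂ → ℂ}
    (hf : IsSimilarity f) :
    extendedCenter n v X (f ∘ w) = f (extendedCenter n v X w) := by
  by_cases hw : IsSimilarPolygon n v w
  · obtain ⟨g, β, hg, hβ, rfl⟩ := hw
    exact (extendedCenter_eq hX (hf.comp hg) hβ rfl).trans
      (congrArg f (extendedCenter_eq hX hg hβ rfl).symm)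
  · rw [extendedCenter, extendedCenter, dif_neg hw,
      dif_neg ((isSimilarPolygon_similarity_comp_iff hf).not.mpr hw), hf.univ_centroid_comp]

end ExtendedCenter

/-- Main theorem for `n`-gons, part (ii): every point `X` fixed by the group of
symmetries of the `n`-gon `v` is the value at `v` of some `n`-gon center `Z`
defined on all labellings. -/
theorem stmt15 (n : ℕ) (hn : 3 ≤ n) (v : Fin n → ℂ) (X : ℂ)
    (hX : X ∈ FixPolygon n v) :
    ∃ Z : (Fin n → ℂ) → ℂ,
      (∀ (w : Fin n → ℂ) (α : Fin n → Fin n), IsDihedral n α → Z (w ∘ α) = Z w) ∧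
      (∀ (w : Fin n → ℂ) (f : ℂ → ℂ), IsSimilarity f → Z (f ∘ w) = f (Z w)) ∧
      Z v = X := by
  have : NeZero n := ⟨by omega⟩
  exact ⟨extendedCenter n v X, fun w α hα => extendedCenter_comp hX hα,
    fun w f hf => extendedCenter_similarity_comp hX hf,
    extendedCenter_eq hX IsSimilarity.id IsDihedral.id rfl⟩
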